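/- arXiv:2407.15361 — 3 statements merged into one kernel-verified Lean document; each statement's English description precedes it below -/
import Mathlib

section
/- Let a, b : ℝ → ℝ be continuous T-periodic functions with T > 0 and b(t) > 0 for all t. If ∫₀ᵀ a(t) dt > 0, then the ODE u'(t) = a(t) u(t) − b(t) u(t)² has a unique positive T-periodic solution, given explicitly by u(t) = e^{A(t)} / ( C₀ + ∫₀ᵗ b(s) e^{A(s)} ds ) where A(t) = ∫₀ᵗ a(s) ds and C₀ = ( ∫₀ᵀ b(s) e^{A(s)} ds ) / ( e^{A(T)} − 1 ). -/
/-!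
The Bernoulli substitution `w = exp A / u`, with `A' = a`, turns `u' = a u - b u²` into
`w' = b exp A`, so the solutions are `exp A / (C + ∫₀ᵗ b exp A)`. Over one period `exp A` gets
multiplied by `exp (A T) > 1`, while the denominator gets multiplied by the same factor exactly
when `C = C₀`; this gives periodicity. For uniqueness, `exp A / u - exp A / v` is constant for two
solutions `u`, `v`, and for periodic ones it is also multiplied by `exp (A T) ≠ 1` over a period,
so it vanishes.
-/

open Real intervalIntegral

theorem integral_add_period_of_add_eq_mul {f : ℝ → ℝ} {T c : ℝ} (hf : Continuous f)
    (hfT : ∀ x, f (x + T) = c * f x) (t : ℝ) :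
    ∫ s in 0..t + T, f s = (∫ s in 0..T, f s) + c * ∫ s in 0..t, f s := by
  have hshift : ∫ s in T..t + T, f s = c * ∫ s in 0..t, f s := by
    simpa [hfT] using (integral_comp_add_right f T (a := 0) (b := t)).symm
  rw [← integral_add_adjacent_intervals (hf.intervalIntegrable 0 T) (hf.intervalIntegrable T _),
    hshift]

theorem add_integral_add_period_of_add_eq_mul {f : ℝ → ℝ} {T c C : ℝ} (hf : Continuous f)
    (hfT : ∀ x, f (x + T) = c * f x) (hc : c ≠ 1) (hC : C = (∫ s in 0..T, f s) / (c - 1))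
    (t : ℝ) :
    C + ∫ s in 0..t + T, f s = c * (C + ∫ s in 0..t, f s) := by
  have : c - 1 ≠ 0 := sub_ne_zero.2 hc
  rw [integral_add_period_of_add_eq_mul hf hfT, hC]
  field_simp
  ring

def SolvesLogistic (a b u : ℝ → ℝ) : Prop :=
  ∀ t, HasDerivAt u (a t * u t - b t * u t ^ 2) t

section Logistic

variable {a b A : ℝ → ℝ} {t : ℝ}

theorem HasDerivAt.exp_div_of_logistic {v : ℝ → ℝ} (hA : HasDerivAt A (a t) t)
    (hv : HasDerivAt v (a t * v t - b t * v t ^ 2) t) (hv0 : v t ≠ 0) :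
    HasDerivAt (fun s => Real.exp (A s) / v s) (b t * Real.exp (A t)) t := by
  refine (hA.exp.fun_div hv hv0).congr_deriv ?_
  field_simp
  ring

theorem HasDerivAt.logistic_exp_div {D : ℝ → ℝ} (hA : HasDerivAt A (a t) t)
    (hD : HasDerivAt D (b t * Real.exp (A t)) t) (hD0 : D t ≠ 0) :
    HasDerivAt (fun s => Real.exp (A s) / D s)
      (a t * (Real.exp (A t) / D t) - b t * (Real.exp (A t) / D t) ^ 2) t := by
  refine (hA.exp.fun_div hD hD0).congr_deriv ?_
  field_simp

theorem SolvesLogistic.eq_of_apply_eq_apply_zero {u v : ℝ → ℝ} {T : ℝ}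
    (hA : ∀ t, HasDerivAt A (a t) t) (hAT : A T ≠ A 0)
    (hu : SolvesLogistic a b u) (hv : SolvesLogistic a b v)
    (hu0 : ∀ t, u t ≠ 0) (hv0 : ∀ t, v t ≠ 0) (huT : u T = u 0) (hvT : v T = v 0) :
    u = v := by
  have hderiv (t : ℝ) :
      HasDerivAt (fun s => exp (A s) / u s - exp (A s) / v s) 0 t := by
    simpa using ((hA t).exp_div_of_logistic (hu t) (hu0 t)).fun_sub
      ((hA t).exp_div_of_logistic (hv t) (hv0 t))
  have hconst (t : ℝ) :
      exp (A t) / u t - exp (A t) / v t = exp (A 0) / u 0 - exp (A 0) / v 0 :=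
    is_const_of_deriv_eq_zero (fun s => (hderiv s).differentiableAt)
      (fun s => (hderiv s).deriv) t 0
  have hinv : (u 0)⁻¹ = (v 0)⁻¹ := by
    have h : (exp (A T) - exp (A 0)) * ((u 0)⁻¹ - (v 0)⁻¹) = 0 := by
      have h := hconst T
      rw [huT, hvT] at h
      linear_combination h
    rcases mul_eq_zero.1 h with h | h
    · exact absurd (exp_injective (sub_eq_zero.1 h)) hAT
    · exact sub_eq_zero.1 h
  funext t
  have h : exp (A t) * ((u t)⁻¹ - (v t)⁻¹) = 0 := by
    linear_combination hconst t + exp (A 0) * hinv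
  simpa [(exp_pos _).ne', sub_eq_zero] using h

end Logistic

theorem exp_div_add_integral_pos_periodic_solvesLogistic {a b A u : ℝ → ℝ} {T C : ℝ}
    (hT : 0 < T) (hb : Continuous b) (hbP : Function.Periodic b T) (hbpos : ∀ t, 0 < b t)
    (hA : ∀ t, HasDerivAt A (a t) t) (hAadd : ∀ t, A (t + T) = A t + A T) (hAT : 0 < A T)
    (hC : C = (∫ s in 0..T, b s * exp (A s)) / (exp (A T) - 1))
    (hu : ∀ t, u t = exp (A t) / (C + ∫ s in 0..t, b s * exp (A s))) :
    (∀ t, 0 < u t) ∧ Function.Periodic u T ∧ SolvesLogistic a b u := by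
  set F := fun s => b s * exp (A s) with hF
  have hFpos (s : ℝ) : 0 < F s := mul_pos (hbpos s) (exp_pos _)
  have hFc : Continuous F :=
    hb.mul (continuous_exp.comp (continuous_iff_continuousAt.2 fun t => (hA t).continuousAt))
  have hFT (x : ℝ) : F (x + T) = exp (A T) * F x := by
    simp only [hF, hbP x, hAadd x, exp_add]
    ring
  have hexp : 1 < exp (A T) := one_lt_exp_iff.2 hAT
  set D := fun t => C + ∫ s in 0..t, F s
  have hDT (t : ℝ) : D (t + T) = exp (A T) * D t :=
    add_integral_add_period_of_add_eq_mul hFc hFT hexp.ne' hC t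
  have huD (t : ℝ) : u t = exp (A t) / D t := hu t
  have huP : Function.Periodic u T := fun t => by
    rw [huD, huD, hAadd, hDT, exp_add, mul_comm (exp (A t)), mul_div_mul_left _ _ (exp_pos _).ne']
  have hCpos : 0 < C := hC ▸
    div_pos (intervalIntegral_pos_of_pos (hFc.intervalIntegrable 0 T) hFpos hT) (sub_pos.2 hexp)
  have hupos (t : ℝ) : 0 < u t := by
    obtain ⟨y, hy, hty⟩ := huP.exists_mem_Ico₀ hT t
    rw [hty, hu]
    exact div_pos (exp_pos _) (add_pos_of_pos_of_nonneg hCpos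
      (integral_nonneg hy.1 fun s _ => (hFpos s).le))
  have hD0 (t : ℝ) : D t ≠ 0 := fun h => (hupos t).ne' (by rw [huD, h, div_zero])
  refine ⟨hupos, huP, fun t => ?_⟩
  simpa only [← hu] using (hA t).logistic_exp_div
    ((hFc.integral_hasStrictDerivAt 0 t).hasDerivAt.const_add C) (hD0 t)

/-- If the mean of `a` over a period is positive, the periodic logistic ODE
`u' = a u − b u²` has a unique positive `T`-periodic solution, given explicitly by the
Bernoulli-substitution formula. -/
theorem stmt7 (a b : ℝ → ℝ) (T : ℝ) (hT : 0 < T)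
    (ha : Continuous a) (hb : Continuous b)
    (haP : Function.Periodic a T) (hbP : Function.Periodic b T)
    (hbpos : ∀ t, 0 < b t)
    (hmean : 0 < ∫ t in (0:ℝ)..T, a t)
    (A : ℝ → ℝ) (hA : ∀ t, A t = ∫ s in (0:ℝ)..t, a s)
    (C0 : ℝ)
    (hC0 : C0 = (∫ s in (0:ℝ)..T, b s * Real.exp (A s)) / (Real.exp (A T) - 1))
    (u : ℝ → ℝ)
    (hu : ∀ t, u t = Real.exp (A t) / (C0 + ∫ s in (0:ℝ)..t, b s * Real.exp (A s))) :
    (∀ t, 0 < u t) ∧ Function.Periodic u T ∧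
    (∀ t, HasDerivAt u (a t * u t - b t * (u t) ^ 2) t) ∧
    (∀ v : ℝ → ℝ, (∀ t, HasDerivAt v (a t * v t - b t * (v t) ^ 2) t) →
      (∀ t, 0 < v t) → Function.Periodic v T → v = u) := by
  have hAderiv (t : ℝ) : HasDerivAt A (a t) t := by
    simpa [← funext hA] using (ha.integral_hasStrictDerivAt 0 t).hasDerivAt
  have hAadd (t : ℝ) : A (t + T) = A t + A T := by
    simpa [hA] using haP.intervalIntegral_add_eq_add 0 t (fun _ _ => ha.intervalIntegrable _ _)
  have hAT : 0 < A T := by rwa [hA]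
  obtain ⟨hupos, huP, hsol⟩ :=
    exp_div_add_integral_pos_periodic_solvesLogistic hT hb hbP hbpos hAderiv hAadd hAT hC0 hu
  refine ⟨hupos, huP, hsol, fun v hv hvpos hvP => ?_⟩
  have hA0 : A 0 = 0 := by simp [hA]
  exact (hsol.eq_of_apply_eq_apply_zero hAderiv (hA0 ▸ hAT.ne') hv (fun t => (hupos t).ne')
    (fun t => (hvpos t).ne') (by simpa using huP 0) (by simpa using hvP 0)).symm
end

section
/- Let a, b : ℝ → ℝ be continuous T-periodic functions with b > 0 and ∫₀ᵀ a(t) dt > 0, and let V be the unique positive T-periodic solution of u' = a u − b u². Then for every solution u of u' = a u − b u² with u(0) > 0, one has u(nT + t) → V(t) as n → ∞, uniformly for t ∈ [0, T]. -/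
/-!
The reciprocal `1 / u` of a nonvanishing solution of `u' = a u - b u²` solves the linear equation
`w' = -a w + b`, so the difference `z` of the reciprocals of two such solutions solves `z' = -a z`,
i.e. `z(s) = z(0) exp (-∫₀ˢ a)`. Positivity of `u` on `[0, ∞)` comes from the same integrating
factor: `u(t) = u(0) exp ∫₀ᵗ (a - b u)`. By periodicity `∫₀^{nT+t} a = ∫₀ᵗ a + n ∫₀ᵀ a`, so
`1 / u(nT + ·) → 1 / V` uniformly on `[0, T]` at the geometric rate `exp (-n ∫₀ᵀ a)`; since `V` is
continuous and positive on the compact `[0, T]`, inverting preserves uniform convergence.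
-/

open Set Filter Topology Real

theorem eq_mul_exp_integral_of_hasDerivAt {g c : ℝ → ℝ} (hc : ContinuousOn c (Ici 0))
    (hg : ∀ x, 0 ≤ x → HasDerivAt g (c x * g x) x) {x : ℝ} (hx : 0 ≤ x) :
    g x = g 0 * exp (∫ s in 0..x, c s) := by
  set P : ℝ → ℝ := fun y => ∫ s in 0..y, c s
  have hc_uIcc : ∀ y, 0 ≤ y → ContinuousOn c (uIcc 0 y) := fun y hy =>
    hc.mono (uIcc_of_le hy ▸ Icc_subset_Ici_self)
  have hP : ∀ y, 0 ≤ y → HasDerivWithinAt P (c y) (Ici y) y := fun y hy =>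
    have hIoi : Ioi y ⊆ Ici 0 := fun s hs => hy.trans (le_of_lt hs)
    intervalIntegral.integral_hasDerivWithinAt_right (hc_uIcc y hy).intervalIntegrable
      ((hc.mono hIoi).stronglyMeasurableAtFilter_nhdsWithin measurableSet_Ioi y)
      ((hc y hy).mono hIoi)
  have hPcont : ContinuousOn P (Icc 0 x) := by
    simpa only [uIcc_of_le hx] using intervalIntegral.continuousOn_primitive_interval
      ((hc_uIcc x hx).integrableOn_compact isCompact_uIcc)
  -- integrating factor: `g * exp (-P)` is constant
  have hconst := constant_of_has_deriv_right_zero (f := fun y => g y * exp (-P y))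
    (fun y hy => (hg y hy.1).continuousAt.continuousWithinAt.mul (hPcont y hy).neg.rexp)
    (fun y hy => ((hg y hy.1).hasDerivWithinAt.mul (hP y hy.1).neg.exp).congr_deriv (by ring))
    x ⟨hx, le_rfl⟩
  simp only [P, intervalIntegral.integral_same, neg_zero, exp_zero, mul_one] at hconst
  rw [← hconst, mul_assoc, ← exp_add, neg_add_cancel, exp_zero, mul_one]

theorem pos_of_hasDerivAt_logistic {a b u : ℝ → ℝ} (ha : Continuous a) (hb : Continuous b)
    (hu : ∀ t, 0 ≤ t → HasDerivAt u (a t * u t - b t * u t ^ 2) t) (hu0 : 0 < u 0)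
    {t : ℝ} (ht : 0 ≤ t) : 0 < u t := by
  have hc : ContinuousOn (fun s => a s - b s * u s) (Ici 0) :=
    ha.continuousOn.sub (hb.continuousOn.mul fun s hs => (hu s hs).continuousAt.continuousWithinAt)
  rw [eq_mul_exp_integral_of_hasDerivAt (g := u) hc
    (fun s hs => by convert hu s hs using 1; ring) ht]
  positivity

theorem hasDerivAt_inv_sub_inv_of_logistic {a b u v : ℝ → ℝ} {t : ℝ}
    (hu : HasDerivAt u (a t * u t - b t * u t ^ 2) t)
    (hv : HasDerivAt v (a t * v t - b t * v t ^ 2) t)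
    (hut : u t ≠ 0) (hvt : v t ≠ 0) :
    HasDerivAt (fun s => (u s)⁻¹ - (v s)⁻¹) (-a t * ((u t)⁻¹ - (v t)⁻¹)) t := by
  refine ((hu.inv hut).sub (hv.inv hvt)).congr_deriv ?_
  field_simp
  ring

theorem inv_sub_inv_eq_of_logistic {a b u v : ℝ → ℝ} (ha : Continuous a)
    (hu : ∀ t, 0 ≤ t → HasDerivAt u (a t * u t - b t * u t ^ 2) t)
    (hv : ∀ t, 0 ≤ t → HasDerivAt v (a t * v t - b t * v t ^ 2) t)
    (hu₀ : ∀ t, 0 ≤ t → u t ≠ 0) (hv₀ : ∀ t, 0 ≤ t → v t ≠ 0) {t : ℝ} (ht : 0 ≤ t) :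
    (u t)⁻¹ - (v t)⁻¹ = ((u 0)⁻¹ - (v 0)⁻¹) * exp (-∫ s in 0..t, a s) := by
  rw [← intervalIntegral.integral_neg]
  exact eq_mul_exp_integral_of_hasDerivAt ha.neg.continuousOn
    (fun s hs => hasDerivAt_inv_sub_inv_of_logistic (hu s hs) (hv s hs) (hu₀ s hs) (hv₀ s hs)) ht

theorem Function.Periodic.intervalIntegral_natMul_add {f : ℝ → ℝ} {T : ℝ}
    (hf : Function.Periodic f T) (hf_int : ∀ t₁ t₂, IntervalIntegrable f MeasureTheory.volume t₁ t₂)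
    (n : ℕ) (t : ℝ) :
    ∫ x in 0..n * T + t, f x = (∫ x in 0..t, f x) + n * ∫ x in 0..T, f x := by
  have h := hf.intervalIntegral_add_zsmul_eq n t hf_int
  simp only [hf.intervalIntegral_add_eq t 0, zero_add, zsmul_eq_mul, Int.cast_natCast] at h
  rw [← h, add_comm (n * T),
    intervalIntegral.integral_add_adjacent_intervals (hf_int _ _) (hf_int _ _)]

theorem tendstoUniformlyOn_of_dist_le {ι α β : Type*} [PseudoMetricSpace β] {F : ι → α → β}
    {f : α → β} {p : Filter ι} {s : Set α} {c : ι → ℝ} (hc : Tendsto c p (𝓝 0))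
    (hF : ∀ᶠ i in p, ∀ x ∈ s, dist (f x) (F i x) ≤ c i) : TendstoUniformlyOn F f p s := by
  rw [Metric.tendstoUniformlyOn_iff]
  intro ε hε
  filter_upwards [hF, hc (Iio_mem_nhds hε)] with i hi hci x hx
  exact (hi x hx).trans_lt hci

theorem TendstoUniformlyOn.of_inv₀ {ι α 𝕜 : Type*} [TopologicalSpace α] [NormedField 𝕜]
    {F : ι → α → 𝕜} {f : α → 𝕜} {p : Filter ι} {s : Set α}
    (hF : TendstoUniformlyOn (fun i x => (F i x)⁻¹) (fun x => (f x)⁻¹) p s) (hs : IsCompact s)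
    (hf : ContinuousOn f s) (hf₀ : ∀ x ∈ s, f x ≠ 0) : TendstoUniformlyOn F f p s := by
  rw [← tendstoLocallyUniformlyOn_iff_tendstoUniformlyOn_of_compact hs] at hF ⊢
  simpa only [inv_inv] using hF.fun_inv₀ (hf.inv₀ hf₀) fun x hx => inv_ne_zero (hf₀ x hx)

theorem stmt8_general (a b : ℝ → ℝ) (T : ℝ) (hT : 0 < T)
    (ha : Continuous a) (hb : Continuous b)
    (haP : Function.Periodic a T)
    (hmean : 0 < ∫ t in (0:ℝ)..T, a t)
    (V : ℝ → ℝ)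
    (hV : ∀ t, HasDerivAt V (a t * V t - b t * (V t) ^ 2) t)
    (hVpos : ∀ t, 0 < V t) (hVP : Function.Periodic V T)
    (u : ℝ → ℝ)
    (hu : ∀ t, 0 ≤ t → HasDerivAt u (a t * u t - b t * (u t) ^ 2) t)
    (hu0 : 0 < u 0) :
    TendstoUniformlyOn (fun (n : ℕ) (t : ℝ) => u (n * T + t)) V
      Filter.atTop (Set.Icc 0 T) := by
  have hz := fun t (ht : 0 ≤ t) => inv_sub_inv_eq_of_logistic ha hu (fun t _ => hV t)
    (fun t ht => (pos_of_hasDerivAt_logistic ha hb hu hu0 ht).ne') (fun t _ => (hVpos t).ne') ht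
  set z₀ := (u 0)⁻¹ - (V 0)⁻¹
  set I := ∫ t in (0:ℝ)..T, a t
  have hA : Continuous fun t => ∫ s in 0..t, a s :=
    intervalIntegral.continuous_primitive (fun _ _ => ha.intervalIntegrable _ _) 0
  obtain ⟨C, hC⟩ := isCompact_Icc.exists_bound_of_continuousOn (s := Icc 0 T)
    (f := fun t => z₀ * exp (-∫ s in 0..t, a s)) (by fun_prop)
  have hdecay : Tendsto (fun n : ℕ => C * exp (-(n * I))) atTop (𝓝 0) := by
    simpa using (tendsto_exp_neg_atTop_nhds_zero.comp
      (tendsto_natCast_atTop_atTop.atTop_mul_const hmean)).const_mul C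
  refine TendstoUniformlyOn.of_inv₀ (tendstoUniformlyOn_of_dist_le hdecay
    (Eventually.of_forall fun n t ht => ?_)) isCompact_Icc
    (fun t _ => (hV t).continuousAt.continuousWithinAt) fun t _ => (hVpos t).ne'
  have hs : 0 ≤ n * T + t := add_nonneg (mul_nonneg n.cast_nonneg hT.le) ht.1
  calc dist (V t)⁻¹ (u (n * T + t))⁻¹
      = |z₀ * exp (-∫ s in 0..t, a s)| * exp (-(n * I)) := by
        rw [dist_comm, Real.dist_eq, ← hVP.nat_mul n t, add_comm t, hz _ hs,
          haP.intervalIntegral_natMul_add (fun _ _ => ha.intervalIntegrable _ _), neg_add, exp_add,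
          ← mul_assoc, abs_mul, abs_exp]
    _ ≤ C * exp (-(n * I)) := by gcongr; exact hC t ht

/-- Global asymptotic stability (in the periodic sense) of the positive periodic solution of
the periodic logistic ODE: every solution with positive initial value converges to it. -/
theorem stmt8 (a b : ℝ → ℝ) (T : ℝ) (hT : 0 < T)
    (ha : Continuous a) (hb : Continuous b)
    (haP : Function.Periodic a T) (hbP : Function.Periodic b T)
    (hbpos : ∀ t, 0 < b t)
    (hmean : 0 < ∫ t in (0:ℝ)..T, a t)
    (V : ℝ → ℝ)
    (hV : ∀ t, HasDerivAt V (a t * V t - b t * (V t) ^ 2) t)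
    (hVpos : ∀ t, 0 < V t) (hVP : Function.Periodic V T)
    (u : ℝ → ℝ)
    (hu : ∀ t, 0 ≤ t → HasDerivAt u (a t * u t - b t * (u t) ^ 2) t)
    (hu0 : 0 < u 0) :
    TendstoUniformlyOn (fun (n : ℕ) (t : ℝ) => u (n * T + t)) V
      Filter.atTop (Set.Icc 0 T) :=
  stmt8_general a b T hT ha hb haP hmean V hV hVpos hVP u hu hu0
end

section
/- Let f, g : [0,1] → ℝ be continuous functions, differentiable at 0 and 1, with f(0) = f(1) = g(0) = g(1) = 0, f(x) > 0 for x ∈ (0,1), f'(0) > 0, f'(1) < 0, and g ≥ 0. Then there exists τ₀ > 0 such that for all τ ∈ (0, τ₀): f(x) > 2τ·g(x) for all x ∈ (0,1). -/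
/-! The ratio `g / f` is continuous on `(0,1)`, and at each endpoint it is a quotient of difference
quotients, so it tends to `g' / f'` there. Hence it extends continuously to `[0,1]` and is bounded
above by some `C ≥ 1`; then `τ₀ = 1 / (2C)` works, since `2τg ≤ 2τCf < f`. -/

open Filter Set Topology

theorem bddAbove_image_Ioo_of_tendsto {α β : Type*}
    [ConditionallyCompleteLinearOrder α] [DenselyOrdered α] [TopologicalSpace α]
    [OrderTopology α]
    [LinearOrder β] [TopologicalSpace β] [OrderTopology β]
    {f : α → β} {a b : α} {la lb : β}
    (hf : ContinuousOn f (Ioo a b)) (ha : Tendsto f (𝓝[>] a) (𝓝 la))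
    (hb : Tendsto f (𝓝[<] b) (𝓝 lb)) : BddAbove (f '' Ioo a b) := by
  have : Nonempty β := ⟨la⟩
  rw [← image_congr (extendFrom_extends hf)]
  exact (isCompact_Icc.bddAbove_image (continuousOn_Icc_extendFrom_Ioo hf ha hb)).mono
    (image_mono Ioo_subset_Icc_self)

theorem tendsto_div_of_hasDerivAt_of_eq_zero {𝕜 : Type*} [NontriviallyNormedField 𝕜]
    {f g : 𝕜 → 𝕜} {f' g' x : 𝕜} (hf : HasDerivAt f f' x) (hg : HasDerivAt g g' x)
    (hfx : f x = 0) (hgx : g x = 0) (hf' : f' ≠ 0) :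
    Tendsto (fun y ↦ g y / f y) (𝓝[≠] x) (𝓝 (g' / f')) := by
  refine ((hasDerivAt_iff_tendsto_slope.mp hg).div
    (hasDerivAt_iff_tendsto_slope.mp hf) hf').congr' ?_
  filter_upwards [self_mem_nhdsWithin] with y hy
  rw [Pi.div_apply, slope_def_field, slope_def_field, hfx, hgx, sub_zero, sub_zero,
    div_div_div_cancel_right₀ (sub_ne_zero.mpr hy)]

theorem stmt10_general (f g : ℝ → ℝ)
    (hf : ContinuousOn f (Set.Icc 0 1)) (hg : ContinuousOn g (Set.Icc 0 1))
    (f'0 f'1 g'0 g'1 : ℝ)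
    (hdf0 : HasDerivAt f f'0 0) (hdf1 : HasDerivAt f f'1 1)
    (hdg0 : HasDerivAt g g'0 0) (hdg1 : HasDerivAt g g'1 1)
    (hf0 : f 0 = 0) (hf1 : f 1 = 0) (hg0 : g 0 = 0) (hg1 : g 1 = 0)
    (hfpos : ∀ x ∈ Set.Ioo (0:ℝ) 1, 0 < f x)
    (hf'0 : 0 < f'0) (hf'1 : f'1 < 0) :
    ∃ τ₀ : ℝ, 0 < τ₀ ∧ ∀ τ ∈ Set.Ioo (0:ℝ) τ₀, ∀ x ∈ Set.Ioo (0:ℝ) 1,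
      2 * τ * g x < f x := by
  have hratio : ContinuousOn (fun x ↦ g x / f x) (Ioo 0 1) :=
    (hg.mono Ioo_subset_Icc_self).div (hf.mono Ioo_subset_Icc_self) fun x hx ↦ (hfpos x hx).ne'
  have hbdd : BddAbove ((fun x ↦ g x / f x) '' Ioo 0 1) := bddAbove_image_Ioo_of_tendsto hratio
    ((tendsto_div_of_hasDerivAt_of_eq_zero hdf0 hdg0 hf0 hg0 hf'0.ne').mono_left
      (nhdsGT_le_nhdsNE 0))
    ((tendsto_div_of_hasDerivAt_of_eq_zero hdf1 hdg1 hf1 hg1 hf'1.ne).mono_left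
      (nhdsLT_le_nhdsNE 1))
  obtain ⟨C, hC1, hC⟩ := hbdd.exists_ge 1
  refine ⟨1 / (2 * C), by positivity, fun τ ⟨hτ0, hτ⟩ x hx ↦ ?_⟩
  have hfx := hfpos x hx
  have hgx : g x ≤ C * f x := (div_le_iff₀ hfx).mp (hC _ (mem_image_of_mem _ hx))
  have hτC : 2 * τ * C < 1 := by rw [lt_div_iff₀ (by positivity)] at hτ; linarith
  calc 2 * τ * g x ≤ 2 * τ * (C * f x) := by gcongr
    _ = 2 * τ * C * f x := by ring
    _ < f x := mul_lt_of_lt_one_left hfx hτC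

/-- A function positive in `(0,1)`, vanishing at the endpoints with nondegenerate one-sided
derivatives, dominates `2τ g` for all small `τ > 0`, where `g ≥ 0` vanishes at the
endpoints and is differentiable there. -/
theorem stmt10 (f g : ℝ → ℝ)
    (hf : ContinuousOn f (Set.Icc 0 1)) (hg : ContinuousOn g (Set.Icc 0 1))
    (f'0 f'1 g'0 g'1 : ℝ)
    (hdf0 : HasDerivAt f f'0 0) (hdf1 : HasDerivAt f f'1 1)
    (hdg0 : HasDerivAt g g'0 0) (hdg1 : HasDerivAt g g'1 1)
    (hf0 : f 0 = 0) (hf1 : f 1 = 0) (hg0 : g 0 = 0) (hg1 : g 1 = 0)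
    (hfpos : ∀ x ∈ Set.Ioo (0:ℝ) 1, 0 < f x)
    (hf'0 : 0 < f'0) (hf'1 : f'1 < 0)
    (hgnn : ∀ x ∈ Set.Icc (0:ℝ) 1, 0 ≤ g x) :
    ∃ τ₀ : ℝ, 0 < τ₀ ∧ ∀ τ ∈ Set.Ioo (0:ℝ) τ₀, ∀ x ∈ Set.Ioo (0:ℝ) 1,
      2 * τ * g x < f x :=
  stmt10_general f g hf hg f'0 f'1 g'0 g'1 hdf0 hdf1 hdg0 hdg1 hf0 hf1 hg0 hg1 hfpos hf'0 hf'1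
end
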